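/- Let 0 < α < 1 and α ≠ 1/2, and let L_α be Salem's singular function. Then L_α is strictly increasing on [0,1]. -/
import Mathlib


/-- Salem's singular function is strictly increasing on [0,1]. -/
theorem salem_strictMonoOn (α : ℝ) (h0 : 0 < α) (h1 : α < 1) (hne : α ≠ 1/2)
    (L : ℝ → ℝ)
    (hcont : ContinuousOn L (Set.Icc 0 1))
    (heq1 : ∀ x ∈ Set.Ico (0:ℝ) (1/2), L x = α * L (2*x))
    (heq2 : ∀ x ∈ Set.Icc (1/2:ℝ) 1, L x = (1-α) * L (2*x - 1) + α) :
    StrictMonoOn L (Set.Icc 0 1) := by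
  have hL0 : L 0 = 0 := by
    have h := heq1 0 (by norm_num)
    have h2 : (2:ℝ) * 0 = 0 := by ring
    rw [h2] at h
    nlinarith
  have hL1 : L 1 = 1 := by
    have h := heq2 1 (by norm_num)
    have h2 : (2:ℝ) * 1 - 1 = 1 := by ring
    rw [h2] at h
    nlinarith
  have heq1' : ∀ x ∈ Set.Icc (0:ℝ) (1/2), L x = α * L (2*x) := by
    intro x hx
    rcases lt_or_eq_of_le hx.2 with h | h
    · exact heq1 x ⟨hx.1, h⟩
    · rw [h]
      have h2 := heq2 (1/2) (by norm_num)
      have e1 : (2:ℝ) * (1/2) - 1 = 0 := by ring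
      have e2 : (2:ℝ) * (1/2) = 1 := by ring
      rw [e1, hL0] at h2
      rw [e2, hL1, h2]
      ring
  -- key dyadic lemma
  have key : ∀ n : ℕ, ∀ k : ℕ, k < 2^n → L ((k:ℝ) / 2^n) < L (((k:ℝ)+1) / 2^n) := by
    intro n
    induction n with
    | zero =>
      intro k hk
      have : k = 0 := by omega
      subst this
      norm_num [hL0, hL1]
    | succ n ih =>
      intro k hk
      have h2n : (0:ℝ) < 2^n := by positivity
      have h2n1 : (0:ℝ) < 2^(n+1) := by positivity
      rcases Nat.lt_or_ge k (2^n) with h | h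
      · -- left half
        have hk1 : (k:ℝ) + 1 ≤ 2^n := by exact_mod_cast Nat.succ_le_of_lt h
        have m1 : ((k:ℝ)) / 2^(n+1) ∈ Set.Icc (0:ℝ) (1/2) := by
          constructor
          · positivity
          · rw [div_le_iff₀ h2n1, pow_succ]
            nlinarith
        have m2 : ((k:ℝ)+1) / 2^(n+1) ∈ Set.Icc (0:ℝ) (1/2) := by
          constructor
          · positivity
          · rw [div_le_iff₀ h2n1, pow_succ]
            nlinarith
        have e1 : 2 * ((k:ℝ) / 2^(n+1)) = (k:ℝ) / 2^n := by
          rw [pow_succ]; field_simp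
        have e2 : 2 * (((k:ℝ)+1) / 2^(n+1)) = ((k:ℝ)+1) / 2^n := by
          rw [pow_succ]; field_simp
        rw [heq1' _ m1, heq1' _ m2, e1, e2]
        exact mul_lt_mul_of_pos_left (ih k h) h0
      · -- right half
        obtain ⟨j, rfl⟩ : ∃ j, k = j + 2^n := ⟨k - 2^n, by omega⟩
        have hj : j < 2^n := by
          have : 2^(n+1) = 2 * 2^n := by ring
          omega
        have hjR : (j:ℝ) + 1 ≤ 2^n := by exact_mod_cast Nat.succ_le_of_lt hj
        have hcast : ((j + 2^n : ℕ) : ℝ) = (j:ℝ) + 2^n := by push_cast; ring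
        rw [hcast]
        have m1 : ((j:ℝ) + 2^n) / 2^(n+1) ∈ Set.Icc (1/2:ℝ) 1 := by
          constructor
          · rw [le_div_iff₀ h2n1, pow_succ]
            have : (0:ℝ) ≤ j := Nat.cast_nonneg j
            nlinarith
          · rw [div_le_one h2n1, pow_succ]
            nlinarith
        have m2 : (((j:ℝ) + 2^n) + 1) / 2^(n+1) ∈ Set.Icc (1/2:ℝ) 1 := by
          constructor
          · rw [le_div_iff₀ h2n1, pow_succ]
            have : (0:ℝ) ≤ j := Nat.cast_nonneg j
            nlinarith
          · rw [div_le_one h2n1, pow_succ]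
            nlinarith
        have e1 : 2 * (((j:ℝ) + 2^n) / 2^(n+1)) - 1 = (j:ℝ) / 2^n := by
          rw [pow_succ]; field_simp; ring
        have e2 : 2 * ((((j:ℝ) + 2^n) + 1) / 2^(n+1)) - 1 = ((j:ℝ)+1) / 2^n := by
          rw [pow_succ]; field_simp; ring
        rw [heq2 _ m1, heq2 _ m2, e1, e2]
        have := mul_lt_mul_of_pos_left (ih j hj) (by linarith : (0:ℝ) < 1 - α)
        linarith
  -- monotonicity on dyadics with common denominator
  have dy : ∀ n : ℕ, ∀ k l : ℕ, k < l → l ≤ 2^n → L ((k:ℝ)/2^n) < L ((l:ℝ)/2^n) := by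
    intro n k l hkl hl
    induction l with
    | zero => omega
    | succ m ih =>
      have step : L ((m:ℝ)/2^n) < L (((m:ℝ)+1)/2^n) := key n m (by omega)
      have ecast : ((m+1 : ℕ) : ℝ) = (m:ℝ) + 1 := by push_cast; ring
      rw [ecast]
      rcases Nat.lt_or_ge k m with h | h
      · exact lt_trans (ih h (by omega)) step
      · have : k = m := by omega
        rw [this]
        exact step
  have dy' : ∀ n : ℕ, ∀ k l : ℕ, k ≤ l → l ≤ 2^n → L ((k:ℝ)/2^n) ≤ L ((l:ℝ)/2^n) := by
    intro n k l hkl hl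
    rcases Nat.eq_or_lt_of_le hkl with h | h
    · rw [h]
    · exact le_of_lt (dy n k l h hl)
  -- half powers tend to zero
  have hhalf : Filter.Tendsto (fun n : ℕ => ((1:ℝ)/2)^n) Filter.atTop (nhds 0) :=
    tendsto_pow_atTop_nhds_zero_of_lt_one (by norm_num) (by norm_num)
  -- global (non-strict) monotonicity
  have mono : ∀ x ∈ Set.Icc (0:ℝ) 1, ∀ y ∈ Set.Icc (0:ℝ) 1, x ≤ y → L x ≤ L y := by
    intro x hx y hy hxy
    set a : ℕ → ℝ := fun n => (⌊x * 2^n⌋₊ : ℝ) / 2^n with ha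
    set b : ℕ → ℝ := fun n => (⌈y * 2^n⌉₊ : ℝ) / 2^n with hb
    have h2n : ∀ n : ℕ, (0:ℝ) < 2^n := fun n => by positivity
    have hxn : ∀ n : ℕ, (0:ℝ) ≤ x * 2^n := fun n => by
      have := hx.1; positivity
    have hyn : ∀ n : ℕ, (0:ℝ) ≤ y * 2^n := fun n => by
      have := hy.1; positivity
    have halow : ∀ n, a n ≤ x := by
      intro n
      rw [ha]
      simp only
      rw [div_le_iff₀ (h2n n)]
      exact Nat.floor_le (hxn n)
    have haup : ∀ n, x - (1/2)^n ≤ a n := by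
      intro n
      rw [ha]
      simp only
      rw [sub_le_iff_le_add, div_add' _ _ _ (ne_of_gt (h2n n))]
      rw [le_div_iff₀ (h2n n)]
      have h1 := Nat.lt_floor_add_one (x * 2^n)
      have : (1/2:ℝ)^n * 2^n = 1 := by
        rw [div_pow, one_pow, div_mul_cancel₀]
        exact ne_of_gt (h2n n)
      nlinarith
    have hblow : ∀ n, y ≤ b n := by
      intro n
      rw [hb]
      simp only
      rw [le_div_iff₀ (h2n n)]
      exact Nat.le_ceil (y * 2^n)
    have hbup : ∀ n, b n ≤ y + (1/2)^n := by
      intro n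
      rw [hb]
      simp only
      rw [div_le_iff₀ (h2n n)]
      have h1 := Nat.ceil_lt_add_one (hyn n)
      have : (1/2:ℝ)^n * 2^n = 1 := by
        rw [div_pow, one_pow, div_mul_cancel₀]
        exact ne_of_gt (h2n n)
      nlinarith
    have hamem : ∀ n, a n ∈ Set.Icc (0:ℝ) 1 := by
      intro n
      exact ⟨by positivity, le_trans (halow n) hx.2⟩
    have hbceil : ∀ n, ⌈y * 2^n⌉₊ ≤ 2^n := by
      intro n
      rw [Nat.ceil_le]
      push_cast
      nlinarith [hy.2, h2n n]
    have hbmem : ∀ n, b n ∈ Set.Icc (0:ℝ) 1 := by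
      intro n
      refine ⟨by positivity, ?_⟩
      rw [hb]
      simp only
      rw [div_le_one (h2n n)]
      exact_mod_cast hbceil n
    have hta : Filter.Tendsto a Filter.atTop (nhds x) := by
      have hl : Filter.Tendsto (fun n : ℕ => x - (1/2)^n) Filter.atTop (nhds x) := by
        have := Filter.Tendsto.sub (tendsto_const_nhds (x := x)) hhalf
        simpa using this
      exact tendsto_of_tendsto_of_tendsto_of_le_of_le hl tendsto_const_nhds haup halow
    have htb : Filter.Tendsto b Filter.atTop (nhds y) := by
      have hu : Filter.Tendsto (fun n : ℕ => y + (1/2)^n) Filter.atTop (nhds y) := by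
        have := Filter.Tendsto.add (tendsto_const_nhds (x := y)) hhalf
        simpa using this
      exact tendsto_of_tendsto_of_tendsto_of_le_of_le tendsto_const_nhds hu hblow hbup
    have hLa : Filter.Tendsto (fun n => L (a n)) Filter.atTop (nhds (L x)) :=
      (hcont x hx).tendsto.comp
        (tendsto_nhdsWithin_of_tendsto_nhds_of_eventually_within a hta
          (Filter.Eventually.of_forall hamem))
    have hLb : Filter.Tendsto (fun n => L (b n)) Filter.atTop (nhds (L y)) :=
      (hcont y hy).tendsto.comp
        (tendsto_nhdsWithin_of_tendsto_nhds_of_eventually_within b htb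
          (Filter.Eventually.of_forall hbmem))
    refine le_of_tendsto_of_tendsto' hLa hLb ?_
    intro n
    apply dy' n
    · -- floor ≤ ceil
      have h1 : ((⌊x * 2^n⌋₊ : ℕ) : ℝ) ≤ ((⌈y * 2^n⌉₊ : ℕ) : ℝ) :=
        le_trans (Nat.floor_le (hxn n))
          (le_trans (by nlinarith [h2n n]) (Nat.le_ceil (y * 2^n)))
      exact_mod_cast h1
    · exact hbceil n
  -- final strict monotonicity
  intro x hx y hy hxy
  obtain ⟨n, hn⟩ : ∃ n : ℕ, ((1:ℝ)/2)^n < (y - x)/2 :=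
    exists_pow_lt_of_lt_one (by linarith) (by norm_num)
  have h2n : (0:ℝ) < 2^n := by positivity
  have hhn : (1/2:ℝ)^n * 2^n = 1 := by
    rw [div_pow, one_pow, div_mul_cancel₀]
    exact ne_of_gt h2n
  set k : ℕ := ⌈x * 2^n⌉₊ with hk
  have hxk : x ≤ (k:ℝ)/2^n := by
    rw [le_div_iff₀ h2n]
    exact Nat.le_ceil (x * 2^n)
  have hku : (k:ℝ) < x * 2^n + 1 := Nat.ceil_lt_add_one (by nlinarith [hx.1])
  have hd2y : ((k:ℝ)+1)/2^n < y := by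
    rw [div_lt_iff₀ h2n]
    nlinarith
  have hk1 : k + 1 ≤ 2^n := by
    have h1 : ((k:ℝ)+1)/2^n < 1 := lt_of_lt_of_le hd2y hy.2
    rw [div_lt_one h2n] at h1
    have : ((k+1:ℕ):ℝ) ≤ ((2^n : ℕ):ℝ) := by push_cast; linarith
    exact_mod_cast this
  have hd1mem : (k:ℝ)/2^n ∈ Set.Icc (0:ℝ) 1 := by
    refine ⟨by positivity, ?_⟩
    rw [div_le_one h2n]
    have : ((k:ℕ):ℝ) ≤ ((2^n : ℕ):ℝ) := by exact_mod_cast Nat.le_of_succ_le hk1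
    push_cast at this ⊢
    linarith
  have hd2mem : ((k:ℝ)+1)/2^n ∈ Set.Icc (0:ℝ) 1 := by
    refine ⟨by positivity, ?_⟩
    rw [div_le_one h2n]
    have : ((k+1:ℕ):ℝ) ≤ ((2^n : ℕ):ℝ) := by exact_mod_cast hk1
    push_cast at this ⊢
    linarith
  have s1 : L x ≤ L ((k:ℝ)/2^n) := mono x hx _ hd1mem hxk
  have s2 : L ((k:ℝ)/2^n) < L (((k:ℝ)+1)/2^n) := by
    have := dy n k (k+1) (by omega) hk1
    have ecast : ((k+1 : ℕ) : ℝ) = (k:ℝ) + 1 := by push_cast; ring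
    rwa [ecast] at this
  have s3 : L (((k:ℝ)+1)/2^n) ≤ L y := mono _ hd2mem y hy (le_of_lt hd2y)
  exact lt_of_le_of_lt s1 (lt_of_lt_of_le s2 s3)
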